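/- Set I = log(19)/π and let τ₂ = √(1 - I²) + iI. Let φ(τ) = -(τ - ρ)/(τ - ρ̄) with ρ = e^(πi/3). Then |φ(τ₂)| = (1 - 2√(1 - I²))/|2 + √3·I - √(1 - I²)| and this quantity is at most 1 - π/(2√3). -/

import Mathlib

/-!
For `z`, `w` on the unit circle, `‖z - w‖² = 2 - 2 Re (z w̄)` and
`‖z - w̄‖² = 2 - 2 Re (z w)`, and the product of these two is `4 (Re z - Re w)²`. Hence
`‖(z - w) / (z - w̄)‖ = 2 |Re z - Re w| / ‖z - w̄‖²`, which for `z = τ₂`, `w = ρ` is the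
closed form.
The inequality is numerical: the Taylor series of `log (1 - 3/19)` pins down
`log 19 = 4 log 2 - log (16/19)` to within `10⁻⁴`, which places `Im τ₂` in `[0.937, 0.9375]`,
and on that interval the closed form stays below `0.093 < 1 - π / (2√3)`.
-/

open Complex Real ComplexConjugate

namespace Complex

variable {z w : ℂ}

theorem normSq_eq_one_iff : normSq z = 1 ↔ ‖z‖ = 1 := by
  rw [normSq_eq_norm_sq, pow_eq_one_iff_of_nonneg (norm_nonneg _) two_ne_zero]

theorem norm_sub_conj_sq_of_norm_eq_one (hz : ‖z‖ = 1) (hw : ‖w‖ = 1) :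
    ‖z - conj w‖ ^ 2 = 2 - 2 * (z.re * w.re - z.im * w.im) := by
  rw [← normSq_eq_one_iff, normSq_apply] at hz hw
  rw [← normSq_eq_norm_sq, normSq_apply]
  simp only [sub_re, sub_im, conj_re, conj_im]
  linear_combination hz + hw

theorem norm_sub_mul_norm_sub_conj_of_norm_eq_one (hz : ‖z‖ = 1) (hw : ‖w‖ = 1) :
    ‖z - w‖ * ‖z - conj w‖ = 2 * |z.re - w.re| := by
  rw [← normSq_eq_one_iff, normSq_apply] at hz hw
  refine (pow_left_inj₀ (by positivity) (by positivity) two_ne_zero).1 ?_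
  rw [mul_pow, mul_pow, sq_abs, ← normSq_eq_norm_sq, ← normSq_eq_norm_sq, normSq_apply,
    normSq_apply]
  simp only [sub_re, sub_im, conj_re, conj_im]
  set e := z.re * z.re + z.im * z.im - 1
  set f := w.re * w.re + w.im * w.im - 1
  linear_combination (e - 3 * f - 4 * z.re * w.re + 4 * w.re ^ 2) * hz
    + (e + f - 4 * z.re * w.re + 4 * z.re ^ 2) * hw

theorem norm_sub_div_sub_conj_of_norm_eq_one (hz : ‖z‖ = 1) (hw : ‖w‖ = 1) :
    ‖(z - w) / (z - conj w)‖ = 2 * |z.re - w.re| / ‖z - conj w‖ ^ 2 := by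
  rw [norm_div, ← norm_sub_mul_norm_sub_conj_of_norm_eq_one hz hw]
  rcases eq_or_ne ‖z - conj w‖ 0 with h | h
  · simp [h]
  · field_simp

theorem exp_pi_mul_I_div_three : exp (π * I / 3) = 1 / 2 + √3 / 2 * I := by
  rw [show (π : ℂ) * I / 3 = ((π / 3 : ℝ) : ℂ) * I by push_cast; ring, exp_mul_I,
    ← ofReal_cos, ← ofReal_sin, Real.cos_pi_div_three, Real.sin_pi_div_three]
  push_cast; ring

theorem norm_sqrt_one_sub_sq_add_I_mul {y : ℝ} (hy : y ^ 2 ≤ 1) :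
    ‖(√(1 - y ^ 2) : ℂ) + I * y‖ = 1 := by
  rw [← normSq_eq_one_iff, normSq_apply]
  simp only [add_re, ofReal_re, mul_re, I_re, zero_mul, I_im, ofReal_im, mul_zero, sub_self,
    add_zero, add_im, mul_im, one_mul, zero_add]
  nlinarith [Real.sq_sqrt (sub_nonneg.2 hy)]

end Complex

theorem norm_neg_sub_div_sub_conj_exp_pi_mul_I_div_three {y : ℝ} (hy : √3 / 2 ≤ y)
    (hy' : y ≤ 1) :
    ‖-(((√(1 - y ^ 2) : ℂ) + I * y - exp (π * I / 3)) /
        ((√(1 - y ^ 2) : ℂ) + I * y - conj (exp (π * I / 3))))‖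
      = (1 - 2 * √(1 - y ^ 2)) / |2 + √3 * y - √(1 - y ^ 2)| := by
  have hy0 : 0 ≤ y := le_trans (by positivity) hy
  have hsq : y ^ 2 ≤ 1 := by nlinarith
  have hρ : ‖exp (π * I / 3)‖ = 1 := by
    rw [show (π : ℂ) * I / 3 = ((π / 3 : ℝ) : ℂ) * I by push_cast; ring,
      norm_exp_ofReal_mul_I]
  set x := √(1 - y ^ 2)
  have hx2 : x ^ 2 = 1 - y ^ 2 := Real.sq_sqrt (sub_nonneg.2 hsq)
  have hx_le : 2 * x ≤ 1 := by
    have h34 : (√3 / 2) ^ 2 ≤ y ^ 2 := pow_le_pow_left₀ (by positivity) hy 2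
    rw [div_pow, Real.sq_sqrt (by norm_num)] at h34
    nlinarith [Real.sqrt_nonneg (1 - y ^ 2)]
  rw [norm_neg, norm_sub_div_sub_conj_of_norm_eq_one (norm_sqrt_one_sub_sq_add_I_mul hsq) hρ,
    norm_sub_conj_sq_of_norm_eq_one (norm_sqrt_one_sub_sq_add_I_mul hsq) hρ,
    exp_pi_mul_I_div_three]
  have hden : 0 < 2 + √3 * y - x := by nlinarith [Real.sqrt_nonneg 3]
  simp only [add_re, ofReal_re, mul_re, I_re, zero_mul, I_im, ofReal_im, mul_zero, sub_self,
    add_zero, one_div, inv_re, re_ofNat, normSq_ofNat, div_self_mul_self', div_ofNat_re,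
    div_ofNat_im, zero_div, mul_one, add_im, mul_im, one_mul, zero_add, inv_im, im_ofNat, neg_zero]
  rw [abs_of_nonpos (by linarith), abs_of_pos hden]
  field_simp
  ring

theorem log_nineteen_mem_Ioo : Real.log 19 ∈ Set.Ioo 2.9442 2.9446 := by
  have hseries := Real.abs_log_sub_add_sum_range_le (x := 3 / 19) (by norm_num [abs_of_pos]) 4
  norm_num [Finset.sum_range_succ, abs_of_pos] at hseries
  have hsplit : Real.log 19 = 4 * Real.log 2 - Real.log (16 / 19) := by
    rw [Real.log_div (by norm_num) (by norm_num), show (16 : ℝ) = 2 ^ 4 by norm_num,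
      Real.log_pow]
    push_cast; ring
  obtain ⟨hseries_lo, hseries_hi⟩ := abs_le.1 hseries
  constructor <;> linarith [Real.log_two_gt_d9, Real.log_two_lt_d9]

theorem log_nineteen_div_pi_mem_Icc : Real.log 19 / π ∈ Set.Icc 0.937 0.9375 := by
  obtain ⟨hlo, hhi⟩ := log_nineteen_mem_Ioo
  have hπ := Real.pi_gt_d6
  have hπ' := Real.pi_lt_d6
  constructor
  · rw [le_div_iff₀ (by linarith)]; nlinarith
  · rw [div_le_iff₀ (by linarith)]; nlinarith

theorem sqrt_three_mem_Ioo : √3 ∈ Set.Ioo 1.732 1.8 := by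
  constructor
  · exact Real.lt_sqrt_of_sq_lt (by norm_num)
  · exact (Real.sqrt_lt' (by norm_num)).2 (by norm_num)

theorem one_sub_two_sqrt_div_abs_le_of_mem_Icc {y : ℝ} (hy : y ∈ Set.Icc 0.937 0.9375) :
    (1 - 2 * √(1 - y ^ 2)) / |2 + √3 * y - √(1 - y ^ 2)| ≤ 0.093 := by
  obtain ⟨hlo, hhi⟩ := hy
  have hx_lo : 0.3479 ≤ √(1 - y ^ 2) := Real.le_sqrt_of_sq_le (by nlinarith)
  have hx_hi : √(1 - y ^ 2) ≤ 0.3494 := Real.sqrt_le_iff.2 ⟨by norm_num, by nlinarith⟩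
  have h3 := sqrt_three_mem_Ioo.1
  have hden : 3.2734 ≤ 2 + √3 * y - √(1 - y ^ 2) := by
    nlinarith [mul_nonneg (sub_nonneg.2 h3.le) (sub_nonneg.2 hlo)]
  rw [abs_of_pos (by linarith), div_le_iff₀ (by linarith)]
  linarith

theorem le_one_sub_pi_div_two_mul_sqrt_three : (0.093 : ℝ) ≤ 1 - π / (2 * √3) := by
  have h3 := sqrt_three_mem_Ioo.1
  have : π / (2 * √3) ≤ 0.907 := by
    rw [div_le_iff₀ (by linarith)]; nlinarith [Real.pi_lt_d6]
  linarith

/-- With `I = log(19)/π`, `τ₂ = √(1 - I²) + iI`, and `φ(τ) = -(τ - ρ)/(τ - ρ̄)` where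
`ρ = e^(πi/3)`, one has `|φ(τ₂)| = (1 - 2√(1 - I²))/|2 + √3·I - √(1 - I²)|` and this
quantity is at most `1 - π/(2√3)`. -/
theorem abs_phi_tau2 :
    ‖(-(((Real.sqrt (1 - (Real.log 19 / π) ^ 2) : ℂ)
              + Complex.I * (Real.log 19 / π) - Complex.exp (π * Complex.I / 3)) /
            (((Real.sqrt (1 - (Real.log 19 / π) ^ 2) : ℂ)
              + Complex.I * (Real.log 19 / π))
              - (starRingEnd ℂ) (Complex.exp (π * Complex.I / 3)))))‖
      = (1 - 2 * Real.sqrt (1 - (Real.log 19 / π) ^ 2)) /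
          |2 + Real.sqrt 3 * (Real.log 19 / π)
            - Real.sqrt (1 - (Real.log 19 / π) ^ 2)| ∧
    (1 - 2 * Real.sqrt (1 - (Real.log 19 / π) ^ 2)) /
        |2 + Real.sqrt 3 * (Real.log 19 / π)
          - Real.sqrt (1 - (Real.log 19 / π) ^ 2)|
      ≤ 1 - π / (2 * Real.sqrt 3) := by
  have hy := log_nineteen_div_pi_mem_Icc
  have h3 := sqrt_three_mem_Ioo
  rw [← ofReal_div]
  refine ⟨norm_neg_sub_div_sub_conj_exp_pi_mul_I_div_three (by linarith [hy.1, h3.2])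
    (by linarith [hy.2]), ?_⟩
  exact (one_sub_two_sqrt_div_abs_le_of_mem_Icc hy).trans le_one_sub_pi_div_two_mul_sqrt_three
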